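/- Let (Y, d_Y) be a compact geodesic metric space and M > 0. Let d_ℓ be the induced length metric on X_M = Y × (0, M] associated to the Balogh–Schramm distance ρ. Then (X_M, d_ℓ) is a geodesic metric space: for every x, y ∈ X_M there is an isometric embedding γ : [0, d_ℓ(x,y)] → X_M with γ(0) = x and γ(d_ℓ(x,y)) = y. -/

import Mathlib

open Set

/-- The Balogh–Schramm distance on `Y × (0, ∞)`:
`ρ((p,s),(q,t)) = 2·log((d_Y(p,q) + max(s,t))/√(s·t))`. -/
noncomputable def BS {Y : Type*} [MetricSpace Y] (x y : Y × ℝ) : ℝ :=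
  2 * Real.log ((dist x.1 y.1 + max x.2 y.2) / Real.sqrt (x.2 * y.2))

/-- Length of the map `γ` over the set `S` with respect to the distance
function `d`: the supremum over finite monotone partitions in `S` of the sums
of consecutive distances (as in Mathlib's `eVariationOn`). -/
noncomputable def lengthOn {X : Type*} (d : X → X → ℝ) (γ : ℝ → X) (S : Set ℝ) : ENNReal :=
  ⨆ p : ℕ × { u : ℕ → ℝ // Monotone u ∧ ∀ i, u i ∈ S },
    ∑ i ∈ Finset.range p.1, ENNReal.ofReal (d (γ (p.2.1 i)) (γ (p.2.1 (i + 1))))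

/-- Membership in `X_M = Y × (0, M]`. -/
def inXM {Y : Type*} (M : ℝ) (x : Y × ℝ) : Prop := 0 < x.2 ∧ x.2 ≤ M

/-- The induced length metric on `X_M = Y × (0, M]`: the infimum of
Balogh–Schramm lengths of continuous paths joining `x` and `y` inside `X_M`. -/
noncomputable def dLen {Y : Type*} [MetricSpace Y] (M : ℝ) (x y : Y × ℝ) : ℝ :=
  (sInf {L : ENNReal | ∃ (a b : ℝ) (γ : ℝ → Y × ℝ), a ≤ b ∧
      ContinuousOn γ (Icc a b) ∧ γ a = x ∧ γ b = y ∧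
      (∀ t ∈ Icc a b, inXM M (γ t)) ∧
      lengthOn (BS (Y := Y)) γ (Icc a b) = L}).toReal

/-- A metric space is geodesic: any two points are joined by an isometric
embedding of `[0, dist p q]`. -/
def GeodesicSpace (Y : Type*) [MetricSpace Y] : Prop :=
  ∀ p q : Y, ∃ α : ℝ → Y, α 0 = p ∧ α (dist p q) = q ∧
    ∀ s ∈ Icc (0:ℝ) (dist p q), ∀ t ∈ Icc (0:ℝ) (dist p q), dist (α s) (α t) = |s - t|

/-- The Gromov product `(x,y)_ω` with respect to the length metric `dLen M`. -/
noncomputable def gromovProd {Y : Type*} [MetricSpace Y] (M : ℝ) (ω x y : Y × ℝ) : ℝ :=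
  (dLen M x ω + dLen M y ω - dLen M x y) / 2

/-!
The length metric has the closed form
`tentLength x y = 2 log h - log s - log t + 2 d / h` for `x = (p, s)`, `y = (q, t)`,
`d = d_Y(p, q)` and `h = min (max d (max s t)) M`: it is the length of the tent that rises
vertically from `x` to height `h`, follows a geodesic of `Y` at height `h`, and descends to `y`.
Since `BS ≤ tentLength`, the tent has `BS`-length at most `tentLength x y`. Conversely
`tentLength` satisfies the triangle inequality and agrees with `BS` to first order on steps that
are short compared with the heights, so every path has `BS`-length at least `tentLength` of its
endpoints. Hence `d_ℓ = tentLength`, and the tent, parametrised by `tentLength`-arc length,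
is a geodesic.
-/

open Real

section TentLength

variable {Y : Type*} [MetricSpace Y] {M : ℝ}

noncomputable def peakHeight (M : ℝ) (x y : Y × ℝ) : ℝ :=
  min (max (dist x.1 y.1) (max x.2 y.2)) M

noncomputable def tentLength (M : ℝ) (x y : Y × ℝ) : ℝ :=
  2 * log (peakHeight M x y) - log x.2 - log y.2 + 2 * dist x.1 y.1 / peakHeight M x y

lemma max_le_peakHeight {x y : Y × ℝ} (hx : inXM M x) (hy : inXM M y) :
    max x.2 y.2 ≤ peakHeight M x y :=
  le_min (le_max_right _ _) (max_le hx.2 hy.2)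

lemma peakHeight_le (x y : Y × ℝ) : peakHeight M x y ≤ M := min_le_right _ _

lemma peakHeight_pos {x y : Y × ℝ} (hx : inXM M x) (hy : inXM M y) : 0 < peakHeight M x y :=
  (lt_max_of_lt_left hx.1).trans_le (max_le_peakHeight hx hy)

lemma peakHeight_comm (x y : Y × ℝ) : peakHeight M x y = peakHeight M y x := by
  rw [peakHeight, peakHeight, dist_comm, max_comm x.2]

lemma tentLength_comm (x y : Y × ℝ) : tentLength M x y = tentLength M y x := by
  rw [tentLength, tentLength, peakHeight_comm, dist_comm]; ring

lemma tentLength_self {x : Y × ℝ} (hx : inXM M x) : tentLength M x x = 0 := by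
  have : peakHeight M x x = x.2 := by
    rw [peakHeight, dist_self, max_self, max_eq_right hx.1.le, min_eq_left hx.2]
  simp only [tentLength, this, dist_self]; ring

/-- `peakHeight` minimises `H ↦ 2 log H + 2 d / H` over `[max s t, M]`, since this function
decreases up to `d` and increases after it. -/
lemma tentLength_le {x y : Y × ℝ} (hx : inXM M x) (hy : inXM M y) {H : ℝ}
    (hH : max x.2 y.2 ≤ H) (hHM : H ≤ M) :
    tentLength M x y ≤ 2 * log H - log x.2 - log y.2 + 2 * dist x.1 y.1 / H := by
  rw [tentLength]
  set h := peakHeight M x y with hh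
  set d := dist x.1 y.1
  have h0 : 0 < h := peakHeight_pos hx hy
  have H0 : 0 < H := (lt_max_of_lt_left hx.1).trans_le hH
  have hclamp : 0 ≤ (H - h) * (h - d) := by
    rcases le_total d (max x.2 y.2) with hd | hd
    · have : h = max x.2 y.2 := by
        rw [hh, peakHeight, max_eq_right hd, min_eq_left (max_le hx.2 hy.2)]
      exact mul_nonneg (by linarith) (by linarith)
    rcases le_total d M with hdM | hdM
    · have : h = d := by rw [hh, peakHeight, max_eq_left hd, min_eq_left hdM]
      simp [this]
    · have : h = M := by rw [hh, peakHeight, max_eq_left hd, min_eq_right hdM]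
      exact mul_nonneg_of_nonpos_of_nonpos (by linarith) (by linarith)
  have hlog : 1 - h / H ≤ log H - log h := by
    have := one_sub_inv_le_log_of_pos (div_pos H0 h0)
    rwa [inv_div, log_div H0.ne' h0.ne'] at this
  have hdiv : d / h - d / H ≤ 1 - h / H := by
    rw [div_sub_div _ _ h0.ne' H0.ne', sub_div' H0.ne', div_le_div_iff₀ (by positivity) H0]
    nlinarith
  linarith [mul_div_assoc 2 d h, mul_div_assoc 2 d H]

lemma tentLength_nonneg {x y : Y × ℝ} (hx : inXM M x) (hy : inXM M y) :
    0 ≤ tentLength M x y := by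
  have h0 := peakHeight_pos hx hy
  have hxh : log x.2 ≤ log (peakHeight M x y) :=
    log_le_log hx.1 ((le_max_left _ _).trans (max_le_peakHeight hx hy))
  have hyh : log y.2 ≤ log (peakHeight M x y) :=
    log_le_log hy.1 ((le_max_right _ _).trans (max_le_peakHeight hx hy))
  have : 0 ≤ 2 * dist x.1 y.1 / peakHeight M x y := by positivity
  rw [tentLength]; linarith

lemma tentLength_triangle {x y z : Y × ℝ} (hx : inXM M x) (hy : inXM M y) (hz : inXM M z) :
    tentLength M x z ≤ tentLength M x y + tentLength M y z := by
  wlog hle : peakHeight M y z ≤ peakHeight M x y generalizing x z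
  · have := this hz hx (by rw [peakHeight_comm z, peakHeight_comm y]; exact (not_le.1 hle).le)
    rw [tentLength_comm z x, tentLength_comm z y, tentLength_comm y x] at this
    linarith
  set h := peakHeight M x y
  set h' := peakHeight M y z
  -- compare with the tent from `x` to `z` at the larger of the two peak heights
  have h0' : 0 < h' := peakHeight_pos hy hz
  have hmax : max x.2 z.2 ≤ h := max_le
    ((le_max_left _ _).trans (max_le_peakHeight hx hy))
    (((le_max_right _ _).trans (max_le_peakHeight hy hz)).trans hle)
  have hdist : 2 * dist x.1 z.1 / h ≤ 2 * dist x.1 y.1 / h + 2 * dist y.1 z.1 / h := by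
    rw [← add_div]
    exact div_le_div_of_nonneg_right (by linarith [dist_triangle x.1 y.1 z.1]) (h0'.le.trans hle)
  have hyh' : log y.2 ≤ log h' :=
    log_le_log hy.1 ((le_max_left _ _).trans (max_le_peakHeight hy hz))
  have hyz : 2 * dist y.1 z.1 / h ≤ 2 * dist y.1 z.1 / h' := by gcongr
  have hxz := tentLength_le hx hz hmax (peakHeight_le x y)
  have hxy : tentLength M x y = 2 * log h - log x.2 - log y.2 + 2 * dist x.1 y.1 / h := rfl
  have hyz' : tentLength M y z = 2 * log h' - log y.2 - log z.2 + 2 * dist y.1 z.1 / h' := rfl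
  linarith

lemma tentLength_chain (f : ℕ → Y × ℝ) (hf : ∀ i, inXM M (f i)) (n : ℕ) :
    tentLength M (f 0) (f n) ≤ ∑ i ∈ Finset.range n, tentLength M (f i) (f (i + 1)) := by
  induction n with
  | zero => simp [tentLength_self (hf 0)]
  | succ n ih =>
    rw [Finset.sum_range_succ]
    linarith [tentLength_triangle (hf 0) (hf n) (hf (n + 1))]

end TentLength

section BSComparison

variable {Y : Type*} [MetricSpace Y] {M : ℝ}

lemma BS_eq_two_mul_log_sub {x y : Y × ℝ} (hx : 0 < x.2) (hy : 0 < y.2) :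
    BS x y = 2 * log (dist x.1 y.1 + max x.2 y.2) - log x.2 - log y.2 := by
  have hm : 0 < max x.2 y.2 := lt_max_of_lt_left hx
  rw [BS, log_div (by positivity) (by positivity), log_sqrt (by positivity),
    log_mul hx.ne' hy.ne']
  ring

lemma BS_le_tentLength {x y : Y × ℝ} (hx : inXM M x) (hy : inXM M y) :
    BS x y ≤ tentLength M x y := by
  rw [BS_eq_two_mul_log_sub hx.1 hy.1, tentLength]
  set h := peakHeight M x y
  set d := dist x.1 y.1
  have h0 : 0 < h := peakHeight_pos hx hy
  have hm0 : 0 < max x.2 y.2 := lt_max_of_lt_left hx.1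
  have hlog : log (d + max x.2 y.2) ≤ log h + d / h :=
    calc log (d + max x.2 y.2)
        ≤ log (d + h) := log_le_log (by positivity) (by linarith [max_le_peakHeight hx hy])
      _ ≤ log h + d / h := by
        have := log_le_sub_one_of_pos (x := (d + h) / h) (by positivity)
        rw [log_div (by positivity) h0.ne', add_div, div_self h0.ne',
          add_sub_cancel_right] at this
        linarith
  linarith [mul_div_assoc 2 d h]

lemma one_sub_mul_tentLength_le_BS {x y : Y × ℝ} (hx : inXM M x) (hy : inXM M y) {ε : ℝ}
    (hε : ε ≤ 1) (hd : dist x.1 y.1 ≤ ε * max x.2 y.2) :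
    (1 - ε) * tentLength M x y ≤ BS x y := by
  set d := dist x.1 y.1
  set m := max x.2 y.2
  have hm0 : 0 < m := lt_max_of_lt_left hx.1
  have hd0 : 0 ≤ d := dist_nonneg
  have hε0 : 0 ≤ ε := by nlinarith
  have hpeak : peakHeight M x y = m := by
    rw [peakHeight, max_eq_right (by nlinarith), min_eq_left (max_le hx.2 hy.2)]
  have hP : 0 ≤ 2 * log m - log x.2 - log y.2 := by
    linarith [log_le_log hx.1 (le_max_left x.2 y.2), log_le_log hy.1 (le_max_right x.2 y.2)]
  have hlog : d / (d + m) ≤ log (d + m) - log m := by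
    have := one_sub_inv_le_log_of_pos (x := (d + m) / m) (by positivity)
    rwa [inv_div, log_div (by positivity) hm0.ne', one_sub_div (by positivity),
      add_sub_cancel_right] at this
  have hflat : (1 - ε) * (d / m) ≤ d / (d + m) := by
    rw [mul_div_assoc', div_le_div_iff₀ hm0 (by positivity)]
    nlinarith [mul_nonneg hd0 hε0]
  rw [BS_eq_two_mul_log_sub hx.1 hy.1, tentLength, hpeak]
  nlinarith [mul_div_assoc 2 d m]

end BSComparison

section ShortPaths

/-- Used with `D u v = d (γ u) (γ v)`: the path `γ` is `1`-Lipschitz on `[a, b]`. -/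
def IsShortOn (D : ℝ → ℝ → ℝ) (a b : ℝ) : Prop :=
  ∀ u ∈ Icc a b, ∀ v ∈ Icc u b, D u v ≤ v - u

variable {D : ℝ → ℝ → ℝ} {a b c : ℝ}

lemma IsShortOn.concat (htri : ∀ u v w, D u w ≤ D u v + D v w) (h₁ : IsShortOn D a b)
    (h₂ : IsShortOn D b c) : IsShortOn D a c := by
  intro u hu v hv
  rcases le_total v b with hvb | hbv
  · exact h₁ u ⟨hu.1, hv.1.trans hvb⟩ v ⟨hv.1, hvb⟩
  rcases le_total u b with hub | hbu
  · linarith [htri u b v, h₁ u ⟨hu.1, hub⟩ b ⟨hub, le_rfl⟩,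
      h₂ b ⟨le_rfl, hv.2.trans' hbv⟩ v ⟨hbv, hv.2⟩]
  · exact h₂ u ⟨hbu, hu.2⟩ v hv

lemma IsShortOn.eq_sub (htri : ∀ u v w, D u w ≤ D u v + D v w) (h : IsShortOn D a b)
    (hab : b - a ≤ D a b) : ∀ u ∈ Icc a b, ∀ v ∈ Icc u b, D u v = v - u := by
  intro u hu v hv
  refine le_antisymm (h u hu v hv) ?_
  linarith [htri a u b, htri u v b, h a ⟨le_rfl, hu.1.trans hu.2⟩ u ⟨hu.1, hu.2⟩,
    h v ⟨hu.1.trans hv.1, hv.2⟩ b ⟨hv.2, le_rfl⟩]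

end ShortPaths

section Length

variable {X : Type*}

lemma sum_le_lengthOn (d : X → X → ℝ) (γ : ℝ → X) {S : Set ℝ} {u : ℕ → ℝ}
    (hu : Monotone u) (huS : ∀ i, u i ∈ S) (n : ℕ) :
    ∑ i ∈ Finset.range n, ENNReal.ofReal (d (γ (u i)) (γ (u (i + 1)))) ≤ lengthOn d γ S :=
  le_iSup_of_le (ι := ℕ × { u : ℕ → ℝ // Monotone u ∧ ∀ i, u i ∈ S })
    ⟨n, u, hu, huS⟩ le_rfl

lemma lengthOn_le_of_isShortOn {d : X → X → ℝ} {γ : ℝ → X} {a b : ℝ}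
    (h : IsShortOn (fun u v => d (γ u) (γ v)) a b) :
    lengthOn d γ (Icc a b) ≤ ENNReal.ofReal (b - a) := by
  refine iSup_le fun ⟨n, u, hu, huS⟩ => ?_
  calc ∑ i ∈ Finset.range n, ENNReal.ofReal (d (γ (u i)) (γ (u (i + 1))))
      ≤ ∑ i ∈ Finset.range n, ENNReal.ofReal (u (i + 1) - u i) :=
        Finset.sum_le_sum fun i _ =>
          ENNReal.ofReal_le_ofReal (h _ (huS i) _ ⟨hu i.le_succ, (huS _).2⟩)
    _ = ENNReal.ofReal (u n - u 0) := by
        rw [← ENNReal.ofReal_sum_of_nonneg fun i _ => sub_nonneg.2 (hu i.le_succ),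
          Finset.sum_range_sub]
    _ ≤ ENNReal.ofReal (b - a) :=
        ENNReal.ofReal_le_ofReal (by linarith [(huS n).2, (huS 0).1])

lemma exists_partition_mesh_lt {a b δ : ℝ} (hab : a ≤ b) (hδ : 0 < δ) :
    ∃ (n : ℕ) (u : ℕ → ℝ), Monotone u ∧ (∀ i, u i ∈ Icc a b) ∧ u 0 = a ∧ u n = b ∧
      ∀ i, u (i + 1) - u i < δ := by
  refine ⟨⌈(b - a) / (δ / 2)⌉₊, fun i => min b (a + i * (δ / 2)), fun i j hij => ?_,
    fun i => ⟨le_min hab ?_, min_le_left _ _⟩, by simp [hab], min_eq_left ?_, fun i => ?_⟩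
  · dsimp only; gcongr
  · have : 0 ≤ (i : ℝ) * (δ / 2) := by positivity
    linarith
  · have := (div_le_iff₀ (half_pos hδ)).1 (Nat.le_ceil ((b - a) / (δ / 2)))
    linarith
  · have : min b (a + ((i + 1 : ℕ) : ℝ) * (δ / 2)) ≤ min b (a + i * (δ / 2)) + δ / 2 := by
      rw [← min_add_add_right]
      exact min_le_min (by linarith) (by push_cast; linarith)
    linarith

lemma ofReal_le_of_forall_one_sub_mul_le {r : ℝ} {ℓ : ENNReal}
    (h : ∀ ε : ℝ, 0 < ε → ε ≤ 1 → ENNReal.ofReal ((1 - ε) * r) ≤ ℓ) :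
    ENNReal.ofReal r ≤ ℓ := by
  have hlim : Filter.Tendsto (fun ε : ℝ => ENNReal.ofReal ((1 - ε) * r))
      (nhdsWithin 0 (Ioi 0)) (nhds (ENNReal.ofReal r)) := by
    refine ENNReal.tendsto_ofReal (tendsto_nhdsWithin_of_tendsto_nhds ?_)
    have hcont : Continuous fun ε : ℝ => (1 - ε) * r := by fun_prop
    simpa using hcont.tendsto 0
  exact le_of_tendsto hlim (Filter.mem_of_superset (Ioc_mem_nhdsGT zero_lt_one)
    fun ε hε => h ε hε.1 hε.2)

end Length

section LowerBound

variable {Y : Type*} [MetricSpace Y] {M : ℝ}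

/-- On a fine partition every step is short compared with the minimal height of the path, so
`BS` dominates `(1 - ε) · tentLength` step by step, and the triangle inequality for
`tentLength` sums the steps up. -/
lemma one_sub_mul_tentLength_le_lengthOn {a b : ℝ} {γ : ℝ → Y × ℝ} (hab : a ≤ b)
    (hcont : ContinuousOn γ (Icc a b)) (hmem : ∀ t ∈ Icc a b, inXM M (γ t))
    {ε : ℝ} (hε0 : 0 < ε) (hε1 : ε ≤ 1) :
    ENNReal.ofReal ((1 - ε) * tentLength M (γ a) (γ b)) ≤ lengthOn BS γ (Icc a b) := by
  obtain ⟨t₀, ht₀, hmin⟩ := isCompact_Icc.exists_isMinOn ⟨a, left_mem_Icc.2 hab⟩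
    (continuous_snd.comp_continuousOn hcont)
  have hc : 0 < (γ t₀).2 := (hmem t₀ ht₀).1
  obtain ⟨δ, hδ, hδγ⟩ := Metric.uniformContinuousOn_iff.1
    (isCompact_Icc.uniformContinuousOn_of_continuous hcont) (ε * (γ t₀).2) (by positivity)
  obtain ⟨n, u, hu, huI, hu0, hun, hstep⟩ := exists_partition_mesh_lt hab hδ
  have hfine : ∀ i, dist (γ (u i)).1 (γ (u (i + 1))).1
      ≤ ε * max (γ (u i)).2 (γ (u (i + 1))).2 := fun i =>
    calc dist (γ (u i)).1 (γ (u (i + 1))).1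
        ≤ dist (γ (u i)) (γ (u (i + 1))) := by rw [Prod.dist_eq]; exact le_max_left _ _
      _ ≤ ε * (γ t₀).2 := (hδγ _ (huI i) _ (huI (i + 1)) (by
          rw [Real.dist_eq, abs_sub_comm, abs_of_nonneg (sub_nonneg.2 (hu i.le_succ))]
          exact hstep i)).le
      _ ≤ ε * max (γ (u i)).2 (γ (u (i + 1))).2 :=
          mul_le_mul_of_nonneg_left ((hmin (huI i)).trans (le_max_left _ _)) hε0.le
  have hchain := tentLength_chain (fun i => γ (u i)) (fun i => hmem _ (huI i)) n
  rw [hu0, hun] at hchain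
  calc ENNReal.ofReal ((1 - ε) * tentLength M (γ a) (γ b))
      ≤ ENNReal.ofReal (∑ i ∈ Finset.range n,
          (1 - ε) * tentLength M (γ (u i)) (γ (u (i + 1)))) :=
        ENNReal.ofReal_le_ofReal (by
          rw [← Finset.mul_sum]; exact mul_le_mul_of_nonneg_left hchain (by linarith))
    _ = ∑ i ∈ Finset.range n,
          ENNReal.ofReal ((1 - ε) * tentLength M (γ (u i)) (γ (u (i + 1)))) :=
        ENNReal.ofReal_sum_of_nonneg fun i _ => mul_nonneg (by linarith)
          (tentLength_nonneg (hmem _ (huI i)) (hmem _ (huI (i + 1))))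
    _ ≤ ∑ i ∈ Finset.range n, ENNReal.ofReal (BS (γ (u i)) (γ (u (i + 1)))) :=
        Finset.sum_le_sum fun i _ => ENNReal.ofReal_le_ofReal
          (one_sub_mul_tentLength_le_BS (hmem _ (huI i)) (hmem _ (huI (i + 1))) hε1 (hfine i))
    _ ≤ lengthOn BS γ (Icc a b) := sum_le_lengthOn BS γ hu huI n

lemma ofReal_tentLength_le_lengthOn {a b : ℝ} {γ : ℝ → Y × ℝ} (hab : a ≤ b)
    (hcont : ContinuousOn γ (Icc a b)) (hmem : ∀ t ∈ Icc a b, inXM M (γ t)) :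
    ENNReal.ofReal (tentLength M (γ a) (γ b)) ≤ lengthOn BS γ (Icc a b) :=
  ofReal_le_of_forall_one_sub_mul_le fun _ hε0 hε1 =>
    one_sub_mul_tentLength_le_lengthOn hab hcont hmem hε0 hε1

end LowerBound

lemma mul_exp_le_iff {s h u : ℝ} (hs : 0 < s) (hh : 0 < h) :
    s * exp u ≤ h ↔ u ≤ log h - log s := by
  rw [← log_div hh.ne' hs.ne', le_log_iff_exp_le (div_pos hh hs), le_div_iff₀ hs, mul_comm]

lemma le_mul_exp_iff {s h u : ℝ} (hs : 0 < s) (hh : 0 < h) :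
    h ≤ s * exp u ↔ log h - log s ≤ u := by
  rw [← log_div hh.ne' hs.ne', log_le_iff_le_exp (div_pos hh hs), div_le_iff₀ hs, mul_comm]

section Tent

variable {Y : Type*} [MetricSpace Y] {M : ℝ}

lemma tentLength_vertical_le (p : Y) {a b : ℝ} (ha : 0 < a) (hab : a ≤ b) (hb : b ≤ M) :
    tentLength M (p, a) (p, b) ≤ log b - log a := by
  have := tentLength_le (x := (p, a)) (y := (p, b)) ⟨ha, hab.trans hb⟩ ⟨ha.trans_le hab, hb⟩
    (max_le hab le_rfl) hb
  simp only [dist_self, mul_zero, zero_div, add_zero] at this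
  linarith

lemma tentLength_level_le (p q : Y) {h : ℝ} (h0 : 0 < h) (hM : h ≤ M) :
    tentLength M (p, h) (q, h) ≤ 2 * dist p q / h := by
  have := tentLength_le (x := (p, h)) (y := (q, h)) ⟨h0, hM⟩ ⟨h0, hM⟩ (max_self h).le hM
  linarith

noncomputable def ascentTime (M : ℝ) (x y : Y × ℝ) : ℝ := log (peakHeight M x y) - log x.2

noncomputable def descentTime (M : ℝ) (x y : Y × ℝ) : ℝ := log (peakHeight M x y) - log y.2

lemma tentLength_eq_add (x y : Y × ℝ) : tentLength M x y =
    ascentTime M x y + 2 * dist x.1 y.1 / peakHeight M x y + descentTime M x y := by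
  rw [tentLength, ascentTime, descentTime]; ring

/-- The tent path from `x` to `y` over the curve `α`: rise vertically from `x` to the peak
height `h`, cross at height `h` along `α` from `α 0` to `α (dist x.1 y.1)`, and descend to
`y`. -/
noncomputable def tentPath (M : ℝ) (α : ℝ → Y) (x y : Y × ℝ) (u : ℝ) : Y × ℝ :=
  (α (projIcc 0 (dist x.1 y.1) dist_nonneg
      ((u - ascentTime M x y) * peakHeight M x y / 2)),
    min (peakHeight M x y) (min (x.2 * exp u) (y.2 * exp (tentLength M x y - u))))

variable {x y : Y × ℝ} {α : ℝ → Y}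

lemma tentPath_mem (hx : inXM M x) (hy : inXM M y) (u : ℝ) : inXM M (tentPath M α x y u) :=
  ⟨lt_min (peakHeight_pos hx hy)
      (lt_min (mul_pos hx.1 (exp_pos u)) (mul_pos hy.1 (exp_pos _))),
    (min_le_left _ _).trans (peakHeight_le x y)⟩

lemma ascentTime_nonneg (hx : inXM M x) (hy : inXM M y) : 0 ≤ ascentTime M x y :=
  sub_nonneg.2 (log_le_log hx.1 ((le_max_left _ _).trans (max_le_peakHeight hx hy)))

lemma descentTime_nonneg (hx : inXM M x) (hy : inXM M y) : 0 ≤ descentTime M x y :=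
  sub_nonneg.2 (log_le_log hy.1 ((le_max_right _ _).trans (max_le_peakHeight hx hy)))

lemma ascentTime_le_sub_descentTime (hx : inXM M x) (hy : inXM M y) :
    ascentTime M x y ≤ tentLength M x y - descentTime M x y := by
  have := peakHeight_pos hx hy
  have : 0 ≤ 2 * dist x.1 y.1 / peakHeight M x y := by positivity
  linarith [tentLength_eq_add (M := M) x y]

lemma tentPath_of_le_ascentTime (hx : inXM M x) (hy : inXM M y) {u : ℝ}
    (hu : u ≤ ascentTime M x y) :
    tentPath M α x y u = (α 0, x.2 * exp u) := by
  have hh := peakHeight_pos hx hy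
  have hup : x.2 * exp u ≤ peakHeight M x y := (mul_exp_le_iff hx.1 hh).2 hu
  have hdown : peakHeight M x y ≤ y.2 * exp (tentLength M x y - u) :=
    (le_mul_exp_iff hy.1 hh).2
      (show descentTime M x y ≤ _ by linarith [ascentTime_le_sub_descentTime hx hy])
  have hr : (u - ascentTime M x y) * peakHeight M x y / 2 ≤ 0 := by
    have := mul_nonpos_of_nonpos_of_nonneg (sub_nonpos.2 hu) hh.le
    linarith
  rw [tentPath, projIcc_of_le_left _ hr, min_eq_left (hup.trans hdown), min_eq_right hup]

lemma crossing_mem_Icc (hx : inXM M x) (hy : inXM M y) {u : ℝ}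
    (hu : u ∈ Icc (ascentTime M x y) (tentLength M x y - descentTime M x y)) :
    (u - ascentTime M x y) * peakHeight M x y / 2 ∈ Icc 0 (dist x.1 y.1) := by
  have hh := peakHeight_pos hx hy
  constructor
  · have := mul_nonneg (sub_nonneg.2 hu.1) hh.le
    linarith
  · have := tentLength_eq_add (M := M) x y
    have h2 : u - ascentTime M x y ≤ 2 * dist x.1 y.1 / peakHeight M x y := by
      linarith [hu.2]
    have := (le_div_iff₀ hh).1 h2
    linarith

lemma tentPath_of_mem_crossing (hx : inXM M x) (hy : inXM M y) {u : ℝ}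
    (hu : u ∈ Icc (ascentTime M x y) (tentLength M x y - descentTime M x y)) :
    tentPath M α x y u =
      (α ((u - ascentTime M x y) * peakHeight M x y / 2), peakHeight M x y) := by
  have hh := peakHeight_pos hx hy
  have hup : peakHeight M x y ≤ x.2 * exp u := (le_mul_exp_iff hx.1 hh).2 hu.1
  have hdown : peakHeight M x y ≤ y.2 * exp (tentLength M x y - u) :=
    (le_mul_exp_iff hy.1 hh).2 (show descentTime M x y ≤ _ by linarith [hu.2])
  rw [tentPath, projIcc_of_mem _ (crossing_mem_Icc hx hy hu), min_eq_left (le_min hup hdown)]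

lemma tentPath_of_sub_descentTime_le (hx : inXM M x) (hy : inXM M y) {u : ℝ}
    (hu : tentLength M x y - descentTime M x y ≤ u) :
    tentPath M α x y u = (α (dist x.1 y.1), y.2 * exp (tentLength M x y - u)) := by
  have hh := peakHeight_pos hx hy
  have hdown : y.2 * exp (tentLength M x y - u) ≤ peakHeight M x y :=
    (mul_exp_le_iff hy.1 hh).2 (show _ ≤ descentTime M x y by linarith)
  have hup : peakHeight M x y ≤ x.2 * exp u :=
    (le_mul_exp_iff hx.1 hh).2
      (show ascentTime M x y ≤ u by linarith [ascentTime_le_sub_descentTime hx hy])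
  have hr : dist x.1 y.1 ≤ (u - ascentTime M x y) * peakHeight M x y / 2 := by
    have := tentLength_eq_add (M := M) x y
    have h2 : 2 * dist x.1 y.1 / peakHeight M x y ≤ u - ascentTime M x y := by linarith
    have := (div_le_iff₀ hh).1 h2
    linarith
  rw [tentPath, projIcc_of_right_le _ hr, min_eq_right (hdown.trans hup), min_eq_right hdown]

lemma tentPath_zero (hx : inXM M x) (hy : inXM M y) (hα0 : α 0 = x.1) :
    tentPath M α x y 0 = x := by
  rw [tentPath_of_le_ascentTime hx hy (ascentTime_nonneg hx hy), hα0, exp_zero, mul_one]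

lemma tentPath_tentLength (hx : inXM M x) (hy : inXM M y) (hαd : α (dist x.1 y.1) = y.1) :
    tentPath M α x y (tentLength M x y) = y := by
  rw [tentPath_of_sub_descentTime_le hx hy (by linarith [descentTime_nonneg hx hy]), hαd,
    sub_self, exp_zero, mul_one]

lemma continuous_tentPath
    (hα : ∀ r ∈ Icc 0 (dist x.1 y.1), ∀ r' ∈ Icc 0 (dist x.1 y.1),
      dist (α r) (α r') = |r - r'|) :
    Continuous (tentPath M α x y) := by
  have hαc : ContinuousOn α (Icc 0 (dist x.1 y.1)) :=
    (LipschitzOnWith.of_dist_le_mul (K := 1) fun r hr r' hr' => by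
      simp [hα r hr r' hr', Real.dist_eq]).continuousOn
  exact (hαc.comp_continuous
    (continuous_subtype_val.comp (continuous_projIcc.comp (by fun_prop))) fun u => Subtype.mem _
    ).prodMk (by fun_prop)

lemma isShortOn_ascent (hx : inXM M x) (hy : inXM M y) :
    IsShortOn (fun u v => tentLength M (tentPath M α x y u) (tentPath M α x y v))
      0 (ascentTime M x y) := by
  intro u hu v hv
  dsimp only
  have hvM : x.2 * exp v ≤ M :=
    ((mul_exp_le_iff hx.1 (peakHeight_pos hx hy)).2 hv.2).trans (peakHeight_le x y)
  rw [tentPath_of_le_ascentTime hx hy (hv.1.trans hv.2), tentPath_of_le_ascentTime hx hy hv.2]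
  refine (tentLength_vertical_le _ (by have := hx.1; positivity)
    (mul_le_mul_of_nonneg_left (exp_le_exp.2 hv.1) hx.1.le) hvM).trans_eq ?_
  rw [log_mul hx.1.ne' (exp_ne_zero _), log_mul hx.1.ne' (exp_ne_zero _), log_exp, log_exp]
  ring

lemma isShortOn_crossing (hx : inXM M x) (hy : inXM M y)
    (hα : ∀ r ∈ Icc 0 (dist x.1 y.1), ∀ r' ∈ Icc 0 (dist x.1 y.1),
      dist (α r) (α r') = |r - r'|) :
    IsShortOn (fun u v => tentLength M (tentPath M α x y u) (tentPath M α x y v))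
      (ascentTime M x y) (tentLength M x y - descentTime M x y) := by
  intro u hu v hv
  dsimp only
  have hv' : v ∈ Icc (ascentTime M x y) (tentLength M x y - descentTime M x y) :=
    ⟨hu.1.trans hv.1, hv.2⟩
  have hh := peakHeight_pos hx hy
  rw [tentPath_of_mem_crossing hx hy hu, tentPath_of_mem_crossing hx hy hv']
  refine (tentLength_level_le _ _ hh (peakHeight_le x y)).trans_eq ?_
  rw [hα _ (crossing_mem_Icc hx hy hu) _ (crossing_mem_Icc hx hy hv'), abs_sub_comm,
    abs_of_nonneg (by nlinarith [hv.1])]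
  field_simp
  ring

lemma isShortOn_descent (hx : inXM M x) (hy : inXM M y) :
    IsShortOn (fun u v => tentLength M (tentPath M α x y u) (tentPath M α x y v))
      (tentLength M x y - descentTime M x y) (tentLength M x y) := by
  intro u hu v hv
  dsimp only
  have huM : y.2 * exp (tentLength M x y - u) ≤ M :=
    ((mul_exp_le_iff hy.1 (peakHeight_pos hx hy)).2
      (show _ ≤ descentTime M x y by linarith [hu.1])).trans (peakHeight_le x y)
  rw [tentPath_of_sub_descentTime_le hx hy hu.1, tentPath_of_sub_descentTime_le hx hy
    (hu.1.trans hv.1), tentLength_comm]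
  refine (tentLength_vertical_le _ (by have := hy.1; positivity)
    (mul_le_mul_of_nonneg_left (exp_le_exp.2 (by linarith [hv.1])) hy.1.le) huM).trans_eq ?_
  rw [log_mul hy.1.ne' (exp_ne_zero _), log_mul hy.1.ne' (exp_ne_zero _), log_exp, log_exp]
  ring

/-- The tent path is a `tentLength`-geodesic: it is short on each of its three pieces, hence
on the whole, and its total time equals the distance between its endpoints. -/
lemma tentLength_tentPath (hx : inXM M x) (hy : inXM M y) (hα0 : α 0 = x.1)
    (hαd : α (dist x.1 y.1) = y.1)
    (hα : ∀ r ∈ Icc 0 (dist x.1 y.1), ∀ r' ∈ Icc 0 (dist x.1 y.1),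
      dist (α r) (α r') = |r - r'|) :
    ∀ u ∈ Icc 0 (tentLength M x y), ∀ v ∈ Icc u (tentLength M x y),
      tentLength M (tentPath M α x y u) (tentPath M α x y v) = v - u := by
  have htri : ∀ u v w, tentLength M (tentPath M α x y u) (tentPath M α x y w)
      ≤ tentLength M (tentPath M α x y u) (tentPath M α x y v)
        + tentLength M (tentPath M α x y v) (tentPath M α x y w) := fun u v w =>
    tentLength_triangle (tentPath_mem hx hy u) (tentPath_mem hx hy v) (tentPath_mem hx hy w)
  refine (((isShortOn_ascent hx hy).concat htri (isShortOn_crossing hx hy hα)).concat htri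
    (isShortOn_descent hx hy)).eq_sub htri ?_
  rw [tentPath_zero hx hy hα0, tentPath_tentLength hx hy hαd, sub_zero]

end Tent

lemma dLen_eq_tentLength {Y : Type*} [MetricSpace Y] (hgeo : GeodesicSpace Y) {M : ℝ}
    {x y : Y × ℝ} (hx : inXM M x) (hy : inXM M y) : dLen M x y = tentLength M x y := by
  obtain ⟨α, hα0, hαd, hα⟩ := hgeo x.1 y.1
  have hL := tentLength_nonneg hx hy
  have hshort : IsShortOn (fun u v => BS (tentPath M α x y u) (tentPath M α x y v))
      0 (tentLength M x y) := fun u hu v hv =>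
    (BS_le_tentLength (tentPath_mem hx hy u) (tentPath_mem hx hy v)).trans
      (tentLength_tentPath hx hy hα0 hαd hα u hu v hv).le
  refine (congrArg ENNReal.toReal (le_antisymm ?_ ?_)).trans (ENNReal.toReal_ofReal hL)
  · exact sInf_le_of_le ⟨0, _, _, hL, (continuous_tentPath hα).continuousOn,
      tentPath_zero hx hy hα0, tentPath_tentLength hx hy hαd,
      fun u _ => tentPath_mem hx hy u, rfl⟩
      ((lengthOn_le_of_isShortOn hshort).trans_eq (by rw [sub_zero]))
  · exact le_sInf fun _ ⟨_, _, _, hab, hcont, hγa, hγb, hmem, hlen⟩ =>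
      hγa ▸ hγb ▸ hlen ▸ ofReal_tentLength_le_lengthOn hab hcont hmem

theorem stmt4_general {Y : Type*} [MetricSpace Y] (hgeo : GeodesicSpace Y)
    {M : ℝ} :
    ∀ x y : Y × ℝ, inXM M x → inXM M y →
      ∃ γ : ℝ → Y × ℝ,
        (∀ t ∈ Icc (0:ℝ) (dLen M x y), inXM M (γ t)) ∧
        γ 0 = x ∧ γ (dLen M x y) = y ∧
        ∀ s ∈ Icc (0:ℝ) (dLen M x y), ∀ t ∈ Icc (0:ℝ) (dLen M x y),
          dLen M (γ s) (γ t) = |s - t| := by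
  intro x y hx hy
  obtain ⟨α, hα0, hαd, hα⟩ := hgeo x.1 y.1
  have hmem := tentPath_mem (α := α) hx hy
  have hgeod := tentLength_tentPath hx hy hα0 hαd hα
  rw [dLen_eq_tentLength hgeo hx hy]
  refine ⟨tentPath M α x y, fun t _ => hmem t, tentPath_zero hx hy hα0,
    tentPath_tentLength hx hy hαd, fun s hs t ht => ?_⟩
  rw [dLen_eq_tentLength hgeo (hmem s) (hmem t)]
  rcases le_total s t with hst | hts
  · rw [hgeod s hs t ⟨hst, ht.2⟩, abs_sub_comm, abs_of_nonneg (sub_nonneg.2 hst)]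
  · rw [tentLength_comm, hgeod t ht s ⟨hts, hs.2⟩, abs_of_nonneg (sub_nonneg.2 hts)]

/-- on a compact geodesic space `Y`, the space `X_M = Y × (0, M]`
with the induced length metric is a geodesic metric space. -/
theorem stmt4 {Y : Type*} [MetricSpace Y] [CompactSpace Y] (hgeo : GeodesicSpace Y)
    {M : ℝ} (hM : 0 < M) :
    ∀ x y : Y × ℝ, inXM M x → inXM M y →
      ∃ γ : ℝ → Y × ℝ,
        (∀ t ∈ Icc (0:ℝ) (dLen M x y), inXM M (γ t)) ∧
        γ 0 = x ∧ γ (dLen M x y) = y ∧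
        ∀ s ∈ Icc (0:ℝ) (dLen M x y), ∀ t ∈ Icc (0:ℝ) (dLen M x y),
          dLen M (γ s) (γ t) = |s - t| :=
  stmt4_general hgeo
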